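/- For all natural numbers n, k and every natural number m ≥ 1: S^{c,d}_{s,q}[n+m, k] = Σ_{r=0}^{n} Σ_{j=0}^{m} S^{c,d}_{s,q}[m,j] · q^{(d + mc + (m−j)(s−1))(k−j)} · binom(r, k−j)_{q^{s−1}} · S^{c,0}_{s,q}[n,r] · Π_{i=0}^{r−k+j−1} [d + mc + (m−j)(s−1) + i·(s−1)]_q, where binom(r, k−j) is interpreted as 0 when j > k and the exponent k − j is computed in ℤ. -/

import Mathlib

/-!
`S^{c,d}_{s,q}[N, K]` is a sum over lattice paths from `(0, 0)` to `(N, K)`; cutting them at row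
`m`, where they pass through some `(m, j)`, writes `S^{c,d}[n + m, k]` as a combination of the
`S^{c,d}[m, j]`. The remaining path segments carry the weights of `S^{c,d'}[n, k - j]` with
`d' = d + m c + (m - j)(s - 1)`, except that they are allowed to run along their bottom level.
These boundary-free numbers expand in the `S^{c,0}[n, r]` with coefficients
`q^{d' t} binom(r, t)_{q^{s-1}} ∏_{i < r - t} [d' + i (s - 1)]_q`, as one checks by induction on
`n` from Pascal's rule for the `q`-binomials and `[a + b]_q = [a]_q + q^a [b]_q`.
-/

/-- The `q`-bracket `[t]_q = (q^t - 1)/(q - 1)` (real exponentiation). -/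
noncomputable def qBracket (q t : ℝ) : ℝ := (q ^ t - 1) / (q - 1)

open Classical in
/-- The `Q`-binomial coefficient: the sum of `Q^(t₁+⋯+t_{n-k})` over all weakly
increasing integer tuples `0 ≤ t₁ ≤ ⋯ ≤ t_{n-k} ≤ k` when `k ≤ n`, and `0` when `k > n`. -/
noncomputable def qBinom (Q : ℝ) (n k : ℕ) : ℝ :=
  if k ≤ n then
    ∑ f ∈ Finset.univ.filter (fun f : Fin (n - k) → Fin (k + 1) => Monotone f),
      Q ^ (∑ i, (f i : ℕ))
  else 0

/-- The generalized `q`-Stirling numbers `S^{c,d}_{s,q}[n,k]`. -/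
noncomputable def genStirlingCD (c d s q : ℝ) : ℕ → ℕ → ℝ
  | 0, 0 => 1
  | 0, _ + 1 => 0
  | _ + 1, 0 => 0
  | n + 1, k + 1 =>
    if k + 1 ≤ n + 1 then
      q ^ (c * (n : ℝ) + d + ((n : ℝ) - (k : ℝ)) * (s - 1)) * genStirlingCD c d s q n k
        + qBracket q (c * (n : ℝ) + d + ((n : ℝ) - (k : ℝ) - 1) * (s - 1)) *
            genStirlingCD c d s q n (k + 1)
    else 0

open Finset

lemma qBracket_zero (q : ℝ) : qBracket q 0 = 0 := by
  simp [qBracket]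

lemma qBracket_add {q : ℝ} (hq : 0 < q) (a b : ℝ) :
    qBracket q (a + b) = qBracket q a + q ^ a * qBracket q b := by
  unfold qBracket
  rw [Real.rpow_add hq]
  ring

section QBinom

variable (Q : ℝ)

open Classical in
noncomputable def qBinomSum (L c : ℕ) : ℝ :=
  ∑ f ∈ univ.filter (fun f : Fin L → Fin (c + 1) => Monotone f), Q ^ (∑ i, (f i : ℕ))

variable {Q}

lemma qBinom_of_le {n k : ℕ} (h : k ≤ n) : qBinom Q n k = qBinomSum Q (n - k) k :=
  if_pos h

lemma qBinom_of_lt {n k : ℕ} (h : n < k) : qBinom Q n k = 0 :=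
  if_neg (by omega)

variable (Q)

lemma qBinomSum_zero_left (c : ℕ) : qBinomSum Q 0 c = 1 := by
  simp [qBinomSum, Subsingleton.monotone]

lemma qBinomSum_zero_right (L : ℕ) : qBinomSum Q L 0 = 1 := by
  simp [qBinomSum, Subsingleton.monotone']

/-- Split the monotone tuples according to whether they start at `0`. -/
lemma qBinomSum_succ_succ (L c : ℕ) :
    qBinomSum Q (L + 1) (c + 1) = qBinomSum Q L (c + 1) + Q ^ (L + 1) * qBinomSum Q (L + 1) c := by
  classical
  unfold qBinomSum
  rw [← sum_filter_add_sum_filter_not _ (fun f => f 0 = 0), mul_sum]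
  congr 1
  · apply sum_nbij' Fin.tail (Fin.cons 0)
    · intro f hf
      simp only [mem_filter, mem_univ, true_and] at hf ⊢
      exact fun a b hab => hf.1 (Fin.succ_le_succ_iff.2 hab)
    · intro g hg
      simp only [mem_filter, mem_univ, true_and, Fin.cons_zero, and_true] at hg ⊢
      exact monotone_iff_forall_lt.2 ((Fin.liftFun_cons (· ≤ ·)).2
        ⟨fun _ => Fin.zero_le _, monotone_iff_forall_lt.1 hg⟩)
    · intro f hf
      simp only [mem_filter, mem_univ, true_and] at hf
      simpa [hf.2] using Fin.cons_self_tail f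
    · intro g _
      exact Fin.tail_cons _ _
    · intro f hf
      simp only [mem_filter, mem_univ, true_and] at hf
      simp [Fin.sum_univ_succ, hf.2, Fin.tail]
  · symm
    apply sum_nbij' (fun g => Fin.succ ∘ g) (fun f => Fin.predAbove 0 ∘ f)
    · intro g hg
      simp only [mem_filter, mem_univ, true_and] at hg ⊢
      exact ⟨Fin.strictMono_succ.monotone.comp hg, Fin.succ_ne_zero _⟩
    · intro f hf
      simp only [mem_filter, mem_univ, true_and] at hf ⊢
      exact (Fin.predAbove_right_monotone 0).comp hf.1
    · intro g _
      funext k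
      exact Fin.predAbove_zero_succ
    · intro f hf
      simp only [mem_filter, mem_univ, true_and] at hf
      funext k
      have hk : f k ≠ 0 := (lt_of_lt_of_le (Fin.pos_iff_ne_zero.2 hf.2) (hf.1 (Fin.zero_le k))).ne'
      exact Fin.succ_predAbove_zero hk
    · intro g _
      simp [← pow_add, sum_add_distrib, add_comm]

lemma qBinom_zero_right (n : ℕ) : qBinom Q n 0 = 1 := by
  rw [qBinom_of_le (Nat.zero_le n), qBinomSum_zero_right]

lemma qBinom_succ_succ (n t : ℕ) :
    qBinom Q (n + 1) (t + 1) = Q ^ (n - t) * qBinom Q n t + qBinom Q n (t + 1) := by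
  rcases lt_trichotomy t n with h | rfl | h
  · obtain ⟨L, rfl⟩ : ∃ L, n = t + L + 1 := ⟨n - t - 1, by omega⟩
    rw [qBinom_of_le (by omega), qBinom_of_le (by omega), qBinom_of_le (by omega),
      show t + L + 1 + 1 - (t + 1) = L + 1 by omega, show t + L + 1 - t = L + 1 by omega,
      show t + L + 1 - (t + 1) = L by omega, qBinomSum_succ_succ]
    ring
  · rw [qBinom_of_le le_rfl, qBinom_of_le le_rfl, qBinom_of_lt (Nat.lt_succ_self t),
      Nat.sub_self, Nat.sub_self, qBinomSum_zero_left, qBinomSum_zero_left]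
    ring
  · rw [qBinom_of_lt (by omega), qBinom_of_lt h, qBinom_of_lt (by omega)]
    ring

end QBinom

section Stirling

variable (c d s q : ℝ)

lemma genStirlingCD_of_lt : ∀ {n k : ℕ}, n < k → genStirlingCD c d s q n k = 0
  | 0, _ + 1, _ => rfl
  | _ + 1, _ + 1, h => if_neg (by omega)

lemma genStirlingCD_succ_zero (n : ℕ) : genStirlingCD c d s q (n + 1) 0 = 0 := rfl

lemma genStirlingCD_succ_succ (n k : ℕ) :
    genStirlingCD c d s q (n + 1) (k + 1)
      = q ^ (c * n + d + (n - k) * (s - 1)) * genStirlingCD c d s q n k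
        + qBracket q (c * n + d + (n - k - 1) * (s - 1)) * genStirlingCD c d s q n (k + 1) := by
  rw [genStirlingCD]
  split_ifs with h
  · rfl
  · rw [genStirlingCD_of_lt c d s q (by omega), genStirlingCD_of_lt c d s q (by omega)]
    ring

/-- Summation by parts against one step of the recurrence of `S^{c,0}`. -/
lemma sum_mul_genStirlingCD_zero_succ (n : ℕ) (a : ℕ → ℝ) :
    ∑ r ∈ range (n + 2), a r * genStirlingCD c 0 s q (n + 1) r
      = ∑ r ∈ range (n + 1), (a (r + 1) * q ^ (c * n + (n - r) * (s - 1))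
          + a r * qBracket q (c * n + (n - r) * (s - 1))) * genStirlingCD c 0 s q n r := by
  set w : ℕ → ℝ := fun r => a r * qBracket q (c * n + (n - r) * (s - 1)) * genStirlingCD c 0 s q n r
  -- `w 0` vanishes since `S^{c,0}[n, 0] = 0` for `n ≥ 1`, and `[c n + n (s - 1)]_q = 0` for `n = 0`.
  have hw0 : w 0 = 0 := by
    cases n with
    | zero => simp [w, qBracket_zero]
    | succ n => simp [w, genStirlingCD_succ_zero]
  have hwn : w (n + 1) = 0 := by
    simp [w, genStirlingCD_of_lt c 0 s q (Nat.lt_succ_self n)]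
  have hshift : ∑ r ∈ range (n + 1), w (r + 1) = ∑ r ∈ range (n + 1), w r := by
    rw [← add_left_inj (w 0), ← sum_range_succ', hw0, add_zero, sum_range_succ, hwn, add_zero]
  rw [sum_range_succ', genStirlingCD_succ_zero, mul_zero, add_zero]
  calc ∑ r ∈ range (n + 1), a (r + 1) * genStirlingCD c 0 s q (n + 1) (r + 1)
      = ∑ r ∈ range (n + 1), (a (r + 1) * q ^ (c * n + (n - r) * (s - 1))
          * genStirlingCD c 0 s q n r + w (r + 1)) := by
        refine sum_congr rfl fun r _ => ?_
        rw [genStirlingCD_succ_succ]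
        simp only [w]
        push_cast
        ring_nf
    _ = _ := by
        rw [sum_add_distrib, hshift, ← sum_add_distrib]
        exact sum_congr rfl fun r _ => by ring

/-- `S^{c,d}_{s,q}` without the boundary condition `S[n + 1, 0] = 0`: the weighted count of lattice
paths that may move horizontally at level `0` as well. -/
noncomputable def genStirlingFree : ℕ → ℕ → ℝ
  | 0, 0 => 1
  | 0, _ + 1 => 0
  | n + 1, 0 => qBracket q (c * n + d + n * (s - 1)) * genStirlingFree n 0
  | n + 1, k + 1 =>
    q ^ (c * n + d + (n - k) * (s - 1)) * genStirlingFree n k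
      + qBracket q (c * n + d + (n - k - 1) * (s - 1)) * genStirlingFree n (k + 1)

lemma genStirlingFree_zero_left (k : ℕ) : genStirlingFree c d s q 0 k = if k = 0 then 1 else 0 := by
  cases k <;> rfl

theorem genStirlingCD_add {m : ℕ} (hm : 1 ≤ m) (n k : ℕ) :
    genStirlingCD c d s q (n + m) k
      = ∑ j ∈ range (m + 1), genStirlingCD c d s q m j *
          if j ≤ k then genStirlingFree c (d + m * c + (m - j) * (s - 1)) s q n (k - j) else 0 := by
  induction n generalizing k with
  | zero =>
    rw [zero_add, sum_eq_single k]
    · simp [genStirlingFree_zero_left]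
    · intro j _ hjk
      split_ifs
      · rw [genStirlingFree_zero_left, if_neg (by omega), mul_zero]
      · rw [mul_zero]
    · intro hk
      rw [genStirlingCD_of_lt c d s q (by simpa using hk), zero_mul]
  | succ n ih =>
    rw [show n + 1 + m = n + m + 1 by omega]
    cases k with
    | zero =>
      obtain ⟨m, rfl⟩ : ∃ m', m = m' + 1 := ⟨m - 1, by omega⟩
      rw [genStirlingCD_succ_zero, sum_range_succ', genStirlingCD_succ_zero, zero_mul, add_zero]
      refine (sum_eq_zero fun j _ => ?_).symm
      rw [if_neg (by omega), mul_zero]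
    | succ k =>
      rw [genStirlingCD_succ_succ, ih k, ih (k + 1), mul_sum, mul_sum, ← sum_add_distrib]
      refine sum_congr rfl fun j _ => ?_
      rcases lt_trichotomy j (k + 1) with hj | rfl | hj
      · rw [if_pos (by omega), if_pos (by omega), if_pos hj.le,
          show k + 1 - j = k - j + 1 by omega, genStirlingFree]
        push_cast [Nat.cast_sub (Nat.le_of_lt_succ hj)]
        ring_nf
      · rw [if_neg (by omega), if_pos le_rfl, if_pos le_rfl, Nat.sub_self, genStirlingFree]
        push_cast
        ring_nf
      · rw [if_neg (by omega), if_neg (by omega), if_neg (by omega)]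
        ring

end Stirling

noncomputable def shiftCoeff (q s A : ℝ) (t r : ℕ) : ℝ :=
  q ^ (A * t) * qBinom (q ^ (s - 1)) r t * ∏ i ∈ range (r - t), qBracket q (A + i * (s - 1))

section ChangeOfD

variable {q : ℝ} (s A : ℝ)

lemma shiftCoeff_zero_succ (r : ℕ) :
    shiftCoeff q s A 0 (r + 1) = qBracket q (A + r * (s - 1)) * shiftCoeff q s A 0 r := by
  simp only [shiftCoeff, qBinom_zero_right, Nat.sub_zero, prod_range_succ]
  ring

/-- The recurrence of `genStirlingFree 0 A s q`, read in the indices `(r, t)`. -/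
lemma shiftCoeff_succ_succ (hq : 0 < q) (t r : ℕ) :
    shiftCoeff q s A (t + 1) (r + 1)
      = q ^ (A + (r - t) * (s - 1)) * shiftCoeff q s A t r
        + qBracket q (A + (r - t - 1) * (s - 1)) * shiftCoeff q s A (t + 1) r := by
  have hpow : q ^ (A * (t + 1 : ℕ)) * (q ^ (s - 1)) ^ (r - t) * qBinom (q ^ (s - 1)) r t
      = q ^ (A + (r - t) * (s - 1)) * q ^ (A * t) * qBinom (q ^ (s - 1)) r t := by
    rcases le_or_gt t r with h | h
    · rw [← Real.rpow_natCast _ (r - t), ← Real.rpow_mul hq.le, ← Real.rpow_add hq,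
        ← Real.rpow_add hq]
      push_cast [h]
      ring_nf
    · rw [qBinom_of_lt h, mul_zero, mul_zero]
  have hprod : qBinom (q ^ (s - 1)) r (t + 1) * ∏ i ∈ range (r - t), qBracket q (A + i * (s - 1))
      = qBracket q (A + (r - t - 1) * (s - 1)) * (qBinom (q ^ (s - 1)) r (t + 1)
          * ∏ i ∈ range (r - (t + 1)), qBracket q (A + i * (s - 1))) := by
    rcases le_or_gt (t + 1) r with h | h
    · rw [show r - t = r - (t + 1) + 1 by omega, prod_range_succ]
      push_cast [h]
      ring_nf
    · rw [qBinom_of_lt h, zero_mul, zero_mul, mul_zero]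
  simp only [shiftCoeff, Nat.add_sub_add_right, qBinom_succ_succ]
  linear_combination (∏ i ∈ range (r - t), qBracket q (A + i * (s - 1))) * hpow
    + q ^ (A * (t + 1 : ℕ)) * hprod

end ChangeOfD

theorem genStirlingFree_eq_sum_shiftCoeff {q : ℝ} (hq : 0 < q) (c s A : ℝ) (n t : ℕ) :
    genStirlingFree c A s q n t
      = ∑ r ∈ range (n + 1), shiftCoeff q s A t r * genStirlingCD c 0 s q n r := by
  induction n generalizing t with
  | zero =>
    cases t <;> simp [genStirlingFree_zero_left, shiftCoeff, qBinom_zero_right, qBinom_of_lt,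
      genStirlingCD]
  | succ n ih =>
    rw [sum_mul_genStirlingCD_zero_succ]
    cases t with
    | zero =>
      rw [genStirlingFree, ih, mul_sum]
      refine sum_congr rfl fun r _ => ?_
      rw [shiftCoeff_zero_succ,
        show c * n + A + n * (s - 1) = (c * n + (n - r) * (s - 1)) + (A + r * (s - 1)) by ring,
        qBracket_add hq]
      ring
    | succ t =>
      rw [genStirlingFree, ih, ih, mul_sum, mul_sum, ← sum_add_distrib]
      refine sum_congr rfl fun r _ => ?_
      rw [shiftCoeff_succ_succ s A hq,
        show c * n + A + (n - t) * (s - 1)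
          = (c * n + (n - r) * (s - 1)) + (A + (r - t) * (s - 1)) by ring,
        show c * n + A + (n - t - 1) * (s - 1)
          = (c * n + (n - r) * (s - 1)) + (A + (r - t - 1) * (s - 1)) by ring,
        qBracket_add hq, Real.rpow_add hq]
      ring

theorem spivey_cd_second_general (q s c d : ℝ) (hq : 0 < q) (n k m : ℕ) (hm : 1 ≤ m) :
    genStirlingCD c d s q (n + m) k
    = ∑ r ∈ Finset.range (n + 1), ∑ j ∈ Finset.range (m + 1),
        genStirlingCD c d s q m j *
          q ^ ((d + (m : ℝ) * c + ((m : ℝ) - (j : ℝ)) * (s - 1)) * ((k : ℝ) - (j : ℝ))) *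
          (if j ≤ k then qBinom (q ^ (s - 1)) r (k - j) else 0) *
          genStirlingCD c 0 s q n r *
          ∏ i ∈ Finset.range (r + j - k),
            qBracket q (d + (m : ℝ) * c + ((m : ℝ) - (j : ℝ)) * (s - 1)
              + (i : ℝ) * (s - 1)) := by
  rw [genStirlingCD_add c d s q hm, sum_comm]
  refine sum_congr rfl fun j _ => ?_
  split_ifs with hjk
  · rw [genStirlingFree_eq_sum_shiftCoeff hq, mul_sum]
    refine sum_congr rfl fun r _ => ?_
    rw [shiftCoeff, Nat.cast_sub hjk, show r - (k - j) = r + j - k by omega]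
    ring
  · simp

/-- Spivey-type convolution for the numbers `S^{c,d}_{s,q}[n,k]`, second form. -/
theorem spivey_cd_second (q s c d : ℝ) (hq : 0 < q) (hq1 : q ≠ 1) (n k m : ℕ) (hm : 1 ≤ m) :
    genStirlingCD c d s q (n + m) k
    = ∑ r ∈ Finset.range (n + 1), ∑ j ∈ Finset.range (m + 1),
        genStirlingCD c d s q m j *
          q ^ ((d + (m : ℝ) * c + ((m : ℝ) - (j : ℝ)) * (s - 1)) * ((k : ℝ) - (j : ℝ))) *
          (if j ≤ k then qBinom (q ^ (s - 1)) r (k - j) else 0) *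
          genStirlingCD c 0 s q n r *
          ∏ i ∈ Finset.range (r + j - k),
            qBracket q (d + (m : ℝ) * c + ((m : ℝ) - (j : ℝ)) * (s - 1)
              + (i : ℝ) * (s - 1)) :=
  spivey_cd_second_general q s c d hq n k m hm
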